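/- Let Ω be a finite set of bonds with independent Bernoulli occupation statuses, and let A, B be increasing events. If A ⊂ ⋃_u (A_u ∘ B_u ∘ C_u) for increasing events A_u, B_u, C_u, then P(A) ≤ Σ_u P(A_u) P(B_u) P(C_u). -/

import Mathlib

open MeasureTheory
open scoped ENNReal

/-- `E` occurs on the set of bonds `B` in configuration `ω`. -/
def OccursOnGen {β : Type*} (E : Set (β → Bool)) (B : Set β) (ω : β → Bool) : Prop :=
  ∀ ω' : β → Bool, (∀ b ∈ B, ω' b = ω b) → ω' ∈ E

/-- Triple disjoint occurrence `E₁ ∘ E₂ ∘ E₃`: the three events occur on pairwise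
disjoint bond sets. -/
def DisjOcc3Gen {β : Type*} (E₁ E₂ E₃ : Set (β → Bool)) : Set (β → Bool) :=
  {ω | ∃ B₁ B₂ B₃ : Set β, Disjoint B₁ B₂ ∧ Disjoint B₁ B₃ ∧ Disjoint B₂ B₃ ∧
    OccursOnGen E₁ B₁ ω ∧ OccursOnGen E₂ B₂ ω ∧ OccursOnGen E₃ B₃ ω}

/-- `E` is an increasing event. -/
def IncreasingEvent {β : Type*} (E : Set (β → Bool)) : Prop :=
  ∀ ω ω' : β → Bool, (∀ b, ω b ≤ ω' b) → ω ∈ E → ω' ∈ E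


/-!
The BK inequality `P(A □ B) ≤ P(A) P(B)` for increasing events (`A □ B` is `DisjOcc A B`), by
induction on the bonds the events depend on.
Condition on one bond `b`, open with probability `q`, and let `A₀, A₁` (resp. `B₀, B₁`) be the
sections of `A` (resp. `B`) with `b` closed or open. If `b` is closed, `A □ B` forces `A₀ □ B₀`;
if it is open, only one of the two disjoint witnesses can use `b`, so `A □ B` forces `X ∪ Y` with
`X = A₁ □ B₀` and `Y = A₀ □ B₁`. As `A₀ □ B₀ ⊆ X ∩ Y` and `X ∪ Y ⊆ A₁ □ B₁`, inclusion–exclusion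
and the induction hypothesis give
`P(A □ B) ≤ (1-q)² a₀b₀ + q(1-q)(a₁b₀ + a₀b₁) + q² a₁b₁ = P(A) P(B)`.
Three events reduce to two since `E ∘ F ∘ G ⊆ E □ (F □ G)`, and the union bound concludes.
-/

section BKInequality

open Function Set

variable {β : Type*}

def DisjOcc (E F : Set (β → Bool)) : Set (β → Bool) :=
  {ω | ∃ S₁ S₂ : Set β, Disjoint S₁ S₂ ∧ OccursOnGen E S₁ ω ∧ OccursOnGen F S₂ ω}

def bondSection [DecidableEq β] (b : β) (c : Bool) (A : Set (β → Bool)) : Set (β → Bool) :=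
  (update · b c) ⁻¹' A

namespace OccursOnGen

variable {E F : Set (β → Bool)} {S : Set β} {ω : β → Bool}

theorem mem (h : OccursOnGen E S ω) : ω ∈ E :=
  h ω fun _ _ => rfl

theorem mono (hEF : E ⊆ F) (h : OccursOnGen E S ω) : OccursOnGen F S ω :=
  fun ω' hω' => hEF (h ω' hω')

theorem piecewise_mem [DecidablePred (· ∈ S)] (h : OccursOnGen E S ω) (ω' : β → Bool) :
    S.piecewise ω ω' ∈ E :=
  h _ fun _ hb => piecewise_eq_of_mem _ _ _ hb

theorem of_le (hE : IncreasingEvent E) {ω' : β → Bool} (hle : ∀ b, ω b ≤ ω' b)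
    (h : OccursOnGen E S ω) : OccursOnGen E S ω' := by
  classical
  intro ω'' hω''
  refine hE _ _ (fun b => ?_) (h.piecewise_mem ω'')
  by_cases hb : b ∈ S
  · simpa [hb, hω'' b hb] using hle b
  · simp [hb]

theorem inter_of_dependsOn {s : Set β} (hE : DependsOn (· ∈ E) s) {ω' : β → Bool}
    (hωω' : ∀ b ∈ s, ω b = ω' b) (h : OccursOnGen E S ω) : OccursOnGen E (S ∩ s) ω' := by
  classical
  intro ω'' hω''
  refine (hE fun b hb => ?_).mp (h.piecewise_mem ω'')
  by_cases hbS : b ∈ S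
  · simp [hbS, hωω' b hb, hω'' b ⟨hbS, hb⟩]
  · simp [hbS]

theorem bondSection_diff [DecidableEq β] {b : β} {c : Bool} (hc : b ∈ S → c = ω b)
    (h : OccursOnGen E S ω) : OccursOnGen (bondSection b c E) (S \ {b}) ω := by
  intro ω' hω'
  refine h _ fun i hi => ?_
  rcases eq_or_ne i b with rfl | hib
  · simpa using hc hi
  · simpa [hib] using hω' i ⟨hi, hib⟩

end OccursOnGen

section DisjointOccurrence

variable {E F G : Set (β → Bool)}

theorem disjOcc_subset_inter : DisjOcc E F ⊆ E ∩ F :=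
  fun _ ⟨_, _, _, hE, hF⟩ => ⟨hE.mem, hF.mem⟩

theorem disjOcc_mono {E' F' : Set (β → Bool)} (hE : E ⊆ E') (hF : F ⊆ F') :
    DisjOcc E F ⊆ DisjOcc E' F' :=
  fun _ ⟨S₁, S₂, hd, h₁, h₂⟩ => ⟨S₁, S₂, hd, h₁.mono hE, h₂.mono hF⟩

theorem IncreasingEvent.disjOcc (hE : IncreasingEvent E) (hF : IncreasingEvent F) :
    IncreasingEvent (DisjOcc E F) :=
  fun _ _ hle ⟨S₁, S₂, hd, h₁, h₂⟩ => ⟨S₁, S₂, hd, h₁.of_le hE hle, h₂.of_le hF hle⟩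

theorem DependsOn.disjOcc {s : Set β} (hE : DependsOn (· ∈ E) s) (hF : DependsOn (· ∈ F) s) :
    DependsOn (· ∈ DisjOcc E F) s := by
  have key : ∀ ⦃x y : β → Bool⦄, (∀ i ∈ s, x i = y i) → x ∈ DisjOcc E F → y ∈ DisjOcc E F := by
    rintro x y hxy ⟨S₁, S₂, hd, h₁, h₂⟩
    exact ⟨S₁ ∩ s, S₂ ∩ s, hd.mono inter_subset_left inter_subset_left,
      h₁.inter_of_dependsOn hE hxy, h₂.inter_of_dependsOn hF hxy⟩
  exact fun x y hxy => propext ⟨key hxy, key fun i hi => (hxy i hi).symm⟩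

theorem disjOcc3Gen_subset_disjOcc : DisjOcc3Gen E F G ⊆ DisjOcc E (DisjOcc F G) := by
  rintro ω ⟨S₁, S₂, S₃, h₁₂, h₁₃, h₂₃, h₁, h₂, h₃⟩
  refine ⟨S₁, S₂ ∪ S₃, disjoint_union_right.2 ⟨h₁₂, h₁₃⟩, h₁, fun ω' hω' => ?_⟩
  exact ⟨S₂, S₃, h₂₃, fun ω'' hω'' => h₂ ω'' fun b hb => (hω'' b hb).trans (hω' b (.inl hb)),
    fun ω'' hω'' => h₃ ω'' fun b hb => (hω'' b hb).trans (hω' b (.inr hb))⟩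

theorem DependsOn.mem_union {s : Set β} (hE : DependsOn (· ∈ E) s) (hF : DependsOn (· ∈ F) s) :
    DependsOn (· ∈ E ∪ F) s :=
  fun _ _ h => congrArg₂ Or (hE h) (hF h)

theorem eq_empty_or_eq_univ_of_dependsOn_empty (hE : DependsOn (· ∈ E) ∅) :
    E = ∅ ∨ E = univ := by
  rcases E.eq_empty_or_nonempty with h | ⟨x, hx⟩
  · exact .inl h
  · exact .inr <| eq_univ_of_forall fun y => (hE.empty x y).mp hx

end DisjointOccurrence

section BondSection

variable [DecidableEq β] {A B : Set (β → Bool)} {b : β}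

theorem update_mem_iff_of_dependsOn (hA : DependsOn (· ∈ A) {b}ᶜ) (ω : β → Bool) (c : Bool) :
    update ω b c ∈ A ↔ ω ∈ A :=
  (hA fun _ hi => update_of_ne hi _ _).to_iff

theorem IncreasingEvent.bondSection (hA : IncreasingEvent A) (b : β) (c : Bool) :
    IncreasingEvent (bondSection b c A) := by
  refine fun ω ω' hle => hA _ _ fun i => ?_
  rcases eq_or_ne i b with rfl | hib
  · simp
  · simpa [hib] using hle i

theorem bondSection_false_subset_true (hA : IncreasingEvent A) (b : β) :
    bondSection b false A ⊆ bondSection b true A := by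
  refine fun ω => hA _ _ fun i => ?_
  rcases eq_or_ne i b with rfl | hib
  · simp
  · simp [hib]

theorem dependsOn_bondSection (A : Set (β → Bool)) (b : β) (c : Bool) :
    DependsOn (· ∈ bondSection b c A) {b}ᶜ := fun x y hxy => by
  have : update x b c = update y b c := funext fun i => by
    rcases eq_or_ne i b with rfl | hib
    · simp
    · simp [hib, hxy i hib]
  simp only [bondSection, mem_preimage, this]

theorem inter_bond_eq_bondSection_inter (A : Set (β → Bool)) (b : β) (c : Bool) :
    A ∩ {ω | ω b = c} = bondSection b c A ∩ {ω | ω b = c} := by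
  ext ω
  simp only [mem_inter_iff, mem_ofPred_eq, bondSection, mem_preimage]
  constructor <;> rintro ⟨h, rfl⟩ <;> simpa using h

theorem mem_disjOcc_bondSection {ω : β → Bool} (h : ω ∈ DisjOcc A B) :
    ω ∈ DisjOcc (bondSection b (ω b) A) (bondSection b false B) ∪
      DisjOcc (bondSection b false A) (bondSection b (ω b) B) := by
  obtain ⟨S₁, S₂, hd, h₁, h₂⟩ := h
  have hd' := hd.mono (sdiff_subset (t := {b})) (sdiff_subset (t := {b}))
  by_cases hb : b ∈ S₂
  · have hb₁ : b ∉ S₁ := fun hb₁ => disjoint_left.1 hd hb₁ hb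
    exact .inr ⟨_, _, hd', h₁.bondSection_diff (absurd · hb₁), h₂.bondSection_diff fun _ => rfl⟩
  · exact .inl ⟨_, _, hd', h₁.bondSection_diff fun _ => rfl, h₂.bondSection_diff (absurd · hb)⟩

end BondSection

section Bernoulli

variable {p : β → ℝ≥0∞} {μ : Measure (β → Bool)} {b : β}

def bondProb (p : β → ℝ≥0∞) (b : β) (c : Bool) : ℝ≥0∞ :=
  if c then p b else 1 - p b

theorem bondProb_add_bondProb_not (hp : p b ≤ 1) (c : Bool) :
    bondProb p b c + bondProb p b (!c) = 1 := by
  cases c <;> simp [bondProb, tsub_add_cancel_of_le hp, add_tsub_cancel_of_le hp]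

theorem bondProb_le_one (hp : p b ≤ 1) (c : Bool) : bondProb p b c ≤ 1 := by
  cases c <;> simp [bondProb, hp]

theorem toReal_bondProb_false_add_true (hp : p b ≤ 1) :
    (bondProb p b false).toReal + (bondProb p b true).toReal = 1 := by
  have h : bondProb p b false + bondProb p b true = 1 := bondProb_add_bondProb_not hp false
  rw [← ENNReal.toReal_add (ne_top_of_le_ne_top ENNReal.one_ne_top (bondProb_le_one hp _))
    (ne_top_of_le_ne_top ENNReal.one_ne_top (bondProb_le_one hp _)), h, ENNReal.toReal_one]

variable [Fintype β]

theorem measureReal_inter_bond_false_add_true [IsFiniteMeasure μ] (A : Set (β → Bool)) (b : β) :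
    μ.real (A ∩ {ω | ω b = false}) + μ.real (A ∩ {ω | ω b = true}) = μ.real A := by
  rw [← measureReal_inter_add_sdiff (s := A)
    (MeasurableSet.of_discrete (s := {ω : β → Bool | ω b = false}))]
  congr 2
  ext ω
  simp

variable [DecidableEq β]

theorem measure_singleton_update_mul (hμ : ∀ f, μ {f} = ∏ i, bondProb p i (f i))
    (f : β → Bool) (b : β) (c : Bool) :
    μ {update f b c} * bondProb p b (f b) = μ {f} * bondProb p b c := by
  rw [hμ, hμ, ← Finset.mul_prod_erase _ _ (Finset.mem_univ b),
    ← Finset.mul_prod_erase _ _ (Finset.mem_univ b), update_self,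
    Finset.prod_congr rfl fun i hi => by rw [update_of_ne (Finset.ne_of_mem_erase hi)]]
  ring

/-- Flipping bond `b` maps one slice of `E` bijectively onto the other, rescaling each point
mass by `bondProb p b c' / bondProb p b c`. -/
theorem bondProb_mul_measure_inter_bond (hμ : ∀ f, μ {f} = ∏ i, bondProb p i (f i))
    {E : Set (β → Bool)} (hE : DependsOn (· ∈ E) {b}ᶜ) (c c' : Bool) :
    bondProb p b c * μ (E ∩ {ω | ω b = c'}) = bondProb p b c' * μ (E ∩ {ω | ω b = c}) := by
  classical
  set S := E ∩ {ω | ω b = c}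
  have hS : E ∩ {ω | ω b = c'} = ↑(S.toFinset.image (update · b c')) := by
    ext ω
    simp only [Finset.coe_image, coe_toFinset, mem_image, S, mem_inter_iff, mem_ofPred_eq]
    constructor
    · rintro ⟨hω, rfl⟩
      exact ⟨update ω b c, ⟨(update_mem_iff_of_dependsOn hE _ _).2 hω, by simp⟩, by simp⟩
    · rintro ⟨ω, ⟨hω, -⟩, rfl⟩
      exact ⟨(update_mem_iff_of_dependsOn hE _ _).2 hω, by simp⟩
  have hinj : InjOn (update · b c') S := fun ω₁ h₁ ω₂ h₂ h => funext fun i => by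
    rcases eq_or_ne i b with rfl | hi
    · exact h₁.2.trans h₂.2.symm
    · simpa [hi] using congrFun h i
  have hμS : μ S = ∑ ω ∈ S.toFinset, μ {ω} := by rw [sum_measure_singleton, coe_toFinset]
  rw [hS, ← sum_measure_singleton, Finset.sum_image (by simpa using hinj), hμS,
    Finset.mul_sum, Finset.mul_sum]
  refine Finset.sum_congr rfl fun ω hω => ?_
  rw [mul_comm, ← (by simpa [S] using hω : ω ∈ S).2, measure_singleton_update_mul hμ, mul_comm]

theorem measure_inter_bond (hp : p b ≤ 1) (hμ : ∀ f, μ {f} = ∏ i, bondProb p i (f i))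
    {E : Set (β → Bool)} (hE : DependsOn (· ∈ E) {b}ᶜ) (c : Bool) :
    μ (E ∩ {ω | ω b = c}) = bondProb p b c * μ E := by
  have hsplit : μ E = μ (E ∩ {ω | ω b = c}) + μ (E ∩ {ω | ω b = !c}) := by
    rw [← measure_inter_add_sdiff E (MeasurableSet.of_discrete (s := {ω : β → Bool | ω b = c}))]
    congr 2
    ext ω
    cases c <;> simp
  rw [hsplit, mul_add, bondProb_mul_measure_inter_bond hμ hE c (!c), ← add_mul,
    bondProb_add_bondProb_not hp, one_mul]

theorem measureReal_inter_bond (hp : p b ≤ 1) (hμ : ∀ f, μ {f} = ∏ i, bondProb p i (f i))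
    {E : Set (β → Bool)} (hE : DependsOn (· ∈ E) {b}ᶜ) (c : Bool) :
    μ.real (E ∩ {ω | ω b = c}) = (bondProb p b c).toReal * μ.real E := by
  simp only [measureReal_def, measure_inter_bond hp hμ hE c, ENNReal.toReal_mul]

variable [IsFiniteMeasure μ]

theorem measureReal_inter_bond_le (hp : p b ≤ 1) (hμ : ∀ f, μ {f} = ∏ i, bondProb p i (f i))
    {D E : Set (β → Bool)} (hE : DependsOn (· ∈ E) {b}ᶜ) {c : Bool}
    (hDE : ∀ ω ∈ D, ω b = c → ω ∈ E) :
    μ.real (D ∩ {ω | ω b = c}) ≤ (bondProb p b c).toReal * μ.real E := by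
  rw [← measureReal_inter_bond hp hμ hE]
  exact measureReal_mono fun ω hω => ⟨hDE ω hω.1 hω.2, hω.2⟩

theorem measureReal_eq_bondSection (hp : p b ≤ 1) (hμ : ∀ f, μ {f} = ∏ i, bondProb p i (f i))
    (A : Set (β → Bool)) :
    μ.real A = (bondProb p b false).toReal * μ.real (bondSection b false A) +
      (bondProb p b true).toReal * μ.real (bondSection b true A) := by
  rw [← measureReal_inter_bond_false_add_true A b, inter_bond_eq_bondSection_inter,
    inter_bond_eq_bondSection_inter A b true,
    measureReal_inter_bond hp hμ (dependsOn_bondSection A b false),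
    measureReal_inter_bond hp hμ (dependsOn_bondSection A b true)]

end Bernoulli

theorem bk_step_inequality {q₀ q₁ a₀ a₁ b₀ b₁ d₀₀ d₁₀ d₀₁ u : ℝ} (hq₀ : 0 ≤ q₀) (hq₁ : 0 ≤ q₁)
    (hq : q₀ + q₁ = 1) (h₀₀ : d₀₀ ≤ a₀ * b₀) (h₁₀ : d₁₀ ≤ a₁ * b₀) (h₀₁ : d₀₁ ≤ a₀ * b₁)
    (hu : u ≤ a₁ * b₁) (hu' : u + d₀₀ ≤ d₁₀ + d₀₁) :
    q₀ * d₀₀ + q₁ * u ≤ (q₀ * a₀ + q₁ * a₁) * (q₀ * b₀ + q₁ * b₁) := by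
  obtain rfl : q₀ = 1 - q₁ := by linarith
  have hq₀₁ : 0 ≤ (1 - q₁) * q₁ := mul_nonneg hq₀ hq₁
  nlinarith [mul_le_mul_of_nonneg_left hu' hq₀₁, mul_le_mul_of_nonneg_left hu (sq_nonneg q₁),
    mul_le_mul_of_nonneg_left h₀₀ (sq_nonneg (1 - q₁)), mul_le_mul_of_nonneg_left h₁₀ hq₀₁,
    mul_le_mul_of_nonneg_left h₀₁ hq₀₁]

section BK

variable [Fintype β] [DecidableEq β] {p : β → ℝ≥0∞} {μ : Measure (β → Bool)}
  {A B : Set (β → Bool)}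

theorem measureReal_disjOcc_le_of_bondSections [IsFiniteMeasure μ] {b : β} (hp : p b ≤ 1)
    (hμ : ∀ f, μ {f} = ∏ i, bondProb p i (f i)) (hA : IncreasingEvent A) (hB : IncreasingEvent B)
    (hsec : ∀ c c', μ.real (DisjOcc (bondSection b c A) (bondSection b c' B)) ≤
      μ.real (bondSection b c A) * μ.real (bondSection b c' B)) :
    μ.real (DisjOcc A B) ≤ μ.real A * μ.real B := by
  set A₀ := bondSection b false A
  set A₁ := bondSection b true A
  set B₀ := bondSection b false B
  set B₁ := bondSection b true B
  set X := DisjOcc A₁ B₀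
  set Y := DisjOcc A₀ B₁
  have hA₀₁ : A₀ ⊆ A₁ := bondSection_false_subset_true hA b
  have hB₀₁ : B₀ ⊆ B₁ := bondSection_false_subset_true hB b
  have hD : μ.real (DisjOcc A B) ≤
      (bondProb p b false).toReal * μ.real (DisjOcc A₀ B₀) +
        (bondProb p b true).toReal * μ.real (X ∪ Y) := by
    rw [← measureReal_inter_bond_false_add_true (DisjOcc A B) b]
    refine add_le_add (measureReal_inter_bond_le hp hμ ?_ fun ω hω hb => ?_)
      (measureReal_inter_bond_le hp hμ ?_ fun ω hω hb => ?_)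
    · exact (dependsOn_bondSection A b false).disjOcc (dependsOn_bondSection B b false)
    · simpa [hb] using mem_disjOcc_bondSection (b := b) hω
    · exact ((dependsOn_bondSection A b true).disjOcc (dependsOn_bondSection B b false)).mem_union
        ((dependsOn_bondSection A b false).disjOcc (dependsOn_bondSection B b true))
    · simpa [hb] using mem_disjOcc_bondSection (b := b) hω
  have hXY : μ.real (X ∪ Y) + μ.real (DisjOcc A₀ B₀) ≤ μ.real X + μ.real Y := by
    rw [← measureReal_union_add_inter (s := X) (MeasurableSet.of_discrete (s := Y))]
    exact add_le_add le_rfl <| measureReal_mono <|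
      subset_inter (disjOcc_mono hA₀₁ subset_rfl) (disjOcc_mono subset_rfl hB₀₁)
  have hXY₁ : μ.real (X ∪ Y) ≤ μ.real A₁ * μ.real B₁ :=
    (measureReal_mono (union_subset (disjOcc_mono subset_rfl hB₀₁)
      (disjOcc_mono hA₀₁ subset_rfl))).trans (hsec true true)
  rw [measureReal_eq_bondSection hp hμ A, measureReal_eq_bondSection hp hμ B]
  exact hD.trans (bk_step_inequality ENNReal.toReal_nonneg ENNReal.toReal_nonneg
    (toReal_bondProb_false_add_true hp) (hsec false false) (hsec true false) (hsec false true)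
    hXY₁ hXY)

theorem measureReal_disjOcc_le_of_dependsOn [IsProbabilityMeasure μ] (hp : ∀ b, p b ≤ 1)
    (hμ : ∀ f, μ {f} = ∏ i, bondProb p i (f i)) (hA : IncreasingEvent A) (hB : IncreasingEvent B)
    {T : Finset β} (hAT : DependsOn (· ∈ A) T) (hBT : DependsOn (· ∈ B) T) :
    μ.real (DisjOcc A B) ≤ μ.real A * μ.real B := by
  induction T using Finset.induction_on generalizing A B with
  | empty =>
    have hAB : μ.real (DisjOcc A B) ≤ μ.real (A ∩ B) := measureReal_mono disjOcc_subset_inter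
    rcases eq_empty_or_eq_univ_of_dependsOn_empty (by simpa using hAT) with rfl | rfl
    · simpa using hAB
    · simpa using hAB
  | insert b T _ ih =>
    have hT : ((insert b T).erase b : Set β) ⊆ T :=
      Finset.coe_subset.2 (Finset.erase_insert_subset b T)
    exact measureReal_disjOcc_le_of_bondSections (hp b) hμ hA hB fun c c' =>
      ih (hA.bondSection b c) (hB.bondSection b c') ((hAT.update b c).mono hT)
        ((hBT.update b c').mono hT)

end BK

section

variable [Fintype β] {p : β → ℝ≥0∞} {μ : Measure (β → Bool)} {A B : Set (β → Bool)}

theorem measure_disjOcc_le [IsProbabilityMeasure μ] (hp : ∀ b, p b ≤ 1)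
    (hμ : ∀ f, μ {f} = ∏ i, bondProb p i (f i)) (hA : IncreasingEvent A) (hB : IncreasingEvent B) :
    μ (DisjOcc A B) ≤ μ A * μ B := by
  classical
  have hdep : ∀ E : Set (β → Bool), DependsOn (· ∈ E) (Finset.univ : Finset β) := fun E => by
    simpa using dependsOn_univ (· ∈ E)
  rw [← ENNReal.toReal_le_toReal (measure_ne_top μ _) (by finiteness), ENNReal.toReal_mul]
  exact measureReal_disjOcc_le_of_dependsOn hp hμ hA hB (hdep A) (hdep B)

theorem measure_disjOcc3Gen_le [IsProbabilityMeasure μ] (hp : ∀ b, p b ≤ 1)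
    (hμ : ∀ f, μ {f} = ∏ i, bondProb p i (f i)) {E F G : Set (β → Bool)} (hE : IncreasingEvent E)
    (hF : IncreasingEvent F) (hG : IncreasingEvent G) :
    μ (DisjOcc3Gen E F G) ≤ μ E * μ F * μ G :=
  calc μ (DisjOcc3Gen E F G)
    _ ≤ μ (DisjOcc E (DisjOcc F G)) := measure_mono disjOcc3Gen_subset_disjOcc
    _ ≤ μ E * μ (DisjOcc F G) := measure_disjOcc_le hp hμ hE (hF.disjOcc hG)
    _ ≤ μ E * (μ F * μ G) := by gcongr; exact measure_disjOcc_le hp hμ hF hG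
    _ = μ E * μ F * μ G := (mul_assoc _ _ _).symm

end

/-- Unlike `measure_iUnion_le`, `ι` need not be countable: finitely many `t i` cover `s`. -/
theorem measure_le_tsum_of_subset_iUnion {α ι : Type*} [MeasurableSpace α] (μ : Measure α)
    {s : Set α} (hs : s.Finite) {t : ι → Set α} (h : s ⊆ ⋃ i, t i) : μ s ≤ ∑' i, μ (t i) := by
  obtain ⟨I, hI, hsI⟩ := finite_subset_iUnion hs h
  calc μ s ≤ μ (⋃ i ∈ hI.toFinset, t i) := measure_mono (by simpa using hsI)
    _ ≤ ∑ i ∈ hI.toFinset, μ (t i) := measure_biUnion_finset_le _ _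
    _ ≤ ∑' i, μ (t i) := ENNReal.sum_le_tsum _

end BKInequality

theorem stmt17_general {β ι : Type*} [Fintype β] (p : β → ℝ≥0∞) (hp : ∀ b, p b ≤ 1)
    (μ : Measure (β → Bool)) (hprob : IsProbabilityMeasure μ)
    (hμ : ∀ f : β → Bool, μ {f} = ∏ b : β, (if f b then p b else 1 - p b))
    (A : Set (β → Bool)) (A' B' C' : ι → Set (β → Bool))
    (hA' : ∀ u, IncreasingEvent (A' u)) (hB' : ∀ u, IncreasingEvent (B' u))
    (hC' : ∀ u, IncreasingEvent (C' u))
    (hsub : A ⊆ ⋃ u : ι, DisjOcc3Gen (A' u) (B' u) (C' u)) :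
    μ A ≤ ∑' u : ι, μ (A' u) * μ (B' u) * μ (C' u) := by
  calc μ A ≤ ∑' u, μ (DisjOcc3Gen (A' u) (B' u) (C' u)) :=
        measure_le_tsum_of_subset_iUnion μ A.toFinite hsub
    _ ≤ ∑' u, μ (A' u) * μ (B' u) * μ (C' u) :=
        ENNReal.tsum_le_tsum fun u => measure_disjOcc3Gen_le hp hμ (hA' u) (hB' u) (hC' u)

/-- Union bound combined with the BK inequality (applied twice): for a finite set of
bonds with independent Bernoulli occupation statuses and increasing events, if
`A ⊆ ⋃_u A_u ∘ B_u ∘ C_u` then `P(A) ≤ Σ_u P(A_u) P(B_u) P(C_u)`. -/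
theorem stmt17 {β ι : Type*} [Fintype β] (p : β → ℝ≥0∞) (hp : ∀ b, p b ≤ 1)
    (μ : Measure (β → Bool)) (hprob : IsProbabilityMeasure μ)
    (hμ : ∀ f : β → Bool, μ {f} = ∏ b : β, (if f b then p b else 1 - p b))
    (A : Set (β → Bool)) (A' B' C' : ι → Set (β → Bool))
    (hA : IncreasingEvent A)
    (hA' : ∀ u, IncreasingEvent (A' u)) (hB' : ∀ u, IncreasingEvent (B' u))
    (hC' : ∀ u, IncreasingEvent (C' u))
    (hsub : A ⊆ ⋃ u : ι, DisjOcc3Gen (A' u) (B' u) (C' u)) :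
    μ A ≤ ∑' u : ι, μ (A' u) * μ (B' u) * μ (C' u) :=
  stmt17_general p hp μ hprob hμ A A' B' C' hA' hB' hC' hsub
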